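/- arXiv:2209.15230 — 5 statements merged into one kernel-verified Lean document; each statement's English description precedes it below -/
import Mathlib

section
/- If x ⇝ y (there is a pseudo-orbit from x to y) under a flow on a compact metric space, then every attractor containing x also contains y, and every repellor containing y also contains x. -/
variable {X : Type*}

/-- `φ` is a flow: a continuous group action of `ℝ` on `X`. -/
def IsFlow [TopologicalSpace X] (φ : X → ℝ → X) : Prop :=
  Continuous (fun p : X × ℝ => φ p.1 p.2) ∧ (∀ x, φ x 0 = x) ∧
    ∀ (x : X) (s t : ℝ), φ (φ x s) t = φ x (s + t)

/-- An `(ε, T)`-chain from `x` to `y`: a finite sequence of points starting at `x`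
and ending at `y`, with jump times at least `T`, where each jump lands within `ε`
of the next point. -/
def IsETChain [MetricSpace X] (φ : X → ℝ → X) (ε T : ℝ) (x y : X) : Prop :=
  ∃ (n : ℕ) (z : ℕ → X) (t : ℕ → ℝ), 1 ≤ n ∧ z 0 = x ∧ z n = y ∧
    ∀ i < n, T ≤ t i ∧ dist (φ (z i) (t i)) (z (i + 1)) < ε

/-- A pseudo-orbit from `x` to `y`: `(ε,T)`-chains exist for all `ε, T > 0`. -/
def Pseudo [MetricSpace X] (φ : X → ℝ → X) (x y : X) : Prop :=
  ∀ ε > (0 : ℝ), ∀ T > (0 : ℝ), IsETChain φ ε T x y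

/-- A point is chain recurrent if there is a pseudo-orbit from it to itself. -/
def ChainRec [MetricSpace X] (φ : X → ℝ → X) (x : X) : Prop := Pseudo φ x x

/-- A set is invariant under the flow `φ`. -/
def IsInvariant' (φ : X → ℝ → X) (A : Set X) : Prop :=
  ∀ x ∈ A, ∀ t : ℝ, φ x t ∈ A

/-- `A` is an attractor of `φ`: a compact nonempty invariant set having a
neighbourhood all of whose points converge uniformly to `A`. -/
def IsAttractor [MetricSpace X] (φ : X → ℝ → X) (A : Set X) : Prop :=
  IsCompact A ∧ A.Nonempty ∧ IsInvariant' φ A ∧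
    ∃ U : Set X, IsOpen U ∧ A ⊆ U ∧
      ∀ ε > (0 : ℝ), ∃ T : ℝ, ∀ t ≥ T, ∀ x ∈ U, Metric.infDist (φ x t) A < ε

/-- A repellor is an attractor of the time-reversed flow. -/
def IsRepellor [MetricSpace X] (φ : X → ℝ → X) (A : Set X) : Prop :=
  IsAttractor (fun x t => φ x (-t)) A

/-- pseudo-orbits never leave attractors and never enter repellors:
if `x ⇝ y` then every attractor containing `x` contains `y`, and every repellor
containing `y` contains `x`. -/
theorem pseudo_orbit_attractor_repellor [MetricSpace X] [CompactSpace X]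
    (φ : X → ℝ → X) (hφ : IsFlow φ) (x y : X) (hxy : Pseudo φ x y) :
    (∀ A : Set X, IsAttractor φ A → x ∈ A → y ∈ A) ∧
    (∀ R : Set X, IsRepellor φ R → y ∈ R → x ∈ R) := by
  obtain ⟨hcont, hzero, hadd⟩ := hφ
  constructor
  · rintro A ⟨hAc, hAne, hAinv, U, hUopen, hAU, hattr⟩ hxA
    -- show infDist y A < ε0 for all ε0 > 0
    have key : ∀ ε0 > (0 : ℝ), Metric.infDist y A < ε0 := by
      intro ε0 hε0
      obtain ⟨δ, hδ, hδU⟩ := hAc.exists_thickening_subset_open hUopen hAU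
      set ε := min ε0 δ / 4 with hεdef
      have hε : 0 < ε := by positivity
      obtain ⟨T, hT⟩ := hattr ε hε
      obtain ⟨n, z, t, hn, hz0, hzn, hchain⟩ :=
        hxy ε hε (max T 1) (lt_of_lt_of_le zero_lt_one (le_max_right _ _))
      have main : ∀ i ≤ n, Metric.infDist (z i) A < 2 * ε := by
        intro i hi
        induction i with
        | zero =>
          rw [hz0, Metric.infDist_zero_of_mem hxA]; positivity
        | succ i ih =>
          have hi' : i < n := hi
          have h1 : Metric.infDist (z i) A < 2 * ε := ih (le_of_lt hi')
          have hU : z i ∈ U := by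
            apply hδU
            rw [Metric.mem_thickening_iff_infDist_lt hAne]
            have : 2 * ε ≤ δ := by
              have := min_le_right ε0 δ; rw [hεdef]; linarith
            linarith
          obtain ⟨ht1, ht2⟩ := hchain i hi'
          have ht3 : T ≤ t i := le_trans (le_max_left _ _) ht1
          have h2 : Metric.infDist (φ (z i) (t i)) A < ε := hT (t i) ht3 (z i) hU
          calc Metric.infDist (z (i + 1)) A
              ≤ Metric.infDist (φ (z i) (t i)) A + dist (z (i + 1)) (φ (z i) (t i)) :=
                Metric.infDist_le_infDist_add_dist
            _ < ε + ε := by rw [dist_comm]; linarith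
            _ = 2 * ε := by ring
      have := main n le_rfl
      rw [hzn] at this
      have h4 : 2 * ε ≤ ε0 := by
        have := min_le_left ε0 δ; rw [hεdef]; linarith
      linarith
    rw [(hAc.isClosed).mem_iff_infDist_zero hAne]
    by_contra h
    have h0 : 0 ≤ Metric.infDist y A := Metric.infDist_nonneg
    have hpos : 0 < Metric.infDist y A := lt_of_le_of_ne h0 (Ne.symm h)
    exact absurd (key _ hpos) (lt_irrefl _)
  · rintro R ⟨hRc, hRne, hRinv, U, hUopen, hRU, hattr⟩ hyR
    have key : ∀ ε0 > (0 : ℝ), Metric.infDist x R < ε0 := by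
      intro ε0 hε0
      obtain ⟨δ, hδ, hδU⟩ := hRc.exists_thickening_subset_open hUopen hRU
      set ε := min ε0 δ / 4 with hεdef
      have hε : 0 < ε := by positivity
      obtain ⟨T, hT⟩ := hattr ε hε
      obtain ⟨n, z, t, hn, hz0, hzn, hchain⟩ :=
        hxy ε hε (max T 1) (lt_of_lt_of_le zero_lt_one (le_max_right _ _))
      -- downward induction: infDist (z (n - k)) R < 2ε for k ≤ n
      have main : ∀ k ≤ n, Metric.infDist (z (n - k)) R < 2 * ε := by
        intro k hk
        induction k with
        | zero =>
          simp only [Nat.sub_zero, hzn, Metric.infDist_zero_of_mem hyR]; positivity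
        | succ k ih =>
          have h1 : Metric.infDist (z (n - k)) R < 2 * ε := ih (le_of_lt hk)
          set i := n - (k + 1) with hidef
          have hik : n - k = i + 1 := by omega
          have hi' : i < n := by omega
          rw [hik] at h1
          obtain ⟨ht1, ht2⟩ := hchain i hi'
          have ht3 : T ≤ t i := le_trans (le_max_left _ _) ht1
          have hU : φ (z i) (t i) ∈ U := by
            apply hδU
            rw [Metric.mem_thickening_iff_infDist_lt hRne]
            have h3ε : 3 * ε ≤ δ := by
              have := min_le_right ε0 δ; rw [hεdef]; linarith
            have : Metric.infDist (φ (z i) (t i)) R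
                ≤ Metric.infDist (z (i + 1)) R + dist (φ (z i) (t i)) (z (i + 1)) :=
              Metric.infDist_le_infDist_add_dist
            linarith
          have h2 := hT (t i) ht3 (φ (z i) (t i)) hU
          have heq : φ (φ (z i) (t i)) (-(t i)) = z i := by
            rw [hadd, add_neg_cancel, hzero]  -- t i + -(t i) = 0
          simp only [] at h2
          rw [heq] at h2
          linarith
      have := main n le_rfl
      simp only [Nat.sub_self, hz0] at this
      have h4 : 2 * ε ≤ ε0 := by
        have := min_le_left ε0 δ; rw [hεdef]; linarith
      linarith
    rw [(hRc.isClosed).mem_iff_infDist_zero hRne]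
    by_contra h
    have h0 : 0 ≤ Metric.infDist x R := Metric.infDist_nonneg
    have hpos : 0 < Metric.infDist x R := lt_of_le_of_ne h0 (Ne.symm h)
    exact absurd (key _ hpos) (lt_irrefl _)
end

section
/- Let φ be a flow on a compact metric space, x a chain recurrent point, and y a point such that every attractor containing x also contains y. Then there is a pseudo-orbit from x to y. -/
variable {X : Type*}

/-- `B` is a trapping region for `A`: an open forward-invariant set with
`φ(cl B, t) ⊆ B` for all `t ≥ T` for some `T > 0`, and `A = ⋂_{t ≥ 0} φ(B, t)`. -/
def IsTrappingFor [TopologicalSpace X] (φ : X → ℝ → X) (A B : Set X) : Prop :=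
  IsOpen B ∧ (∀ x ∈ B, ∀ t ≥ (0 : ℝ), φ x t ∈ B) ∧
    (∃ T > (0 : ℝ), ∀ t ≥ T, ∀ x ∈ closure B, φ x t ∈ B) ∧
    A = ⋂ t ∈ Set.Ici (0 : ℝ), (fun x => φ x t) '' B

/-- `A` is an attractor of `φ` (trapping-region definition). -/
def IsAttractorT [TopologicalSpace X] (φ : X → ℝ → X) (A : Set X) : Prop :=
  IsCompact A ∧ A.Nonempty ∧ IsInvariant' φ A ∧ ∃ B, IsTrappingFor φ A B

/-- The dual repellor of an attractor with trapping region `B`: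
`A* = ⋂_{t ≤ 0} φ(X \ B, t)`. -/
def dualRepellor (φ : X → ℝ → X) (B : Set X) : Set X :=
  ⋂ t ∈ Set.Ici (0 : ℝ), (fun x => φ x (-t)) '' Bᶜ

/-! Fix `ε, T > 0`. The set `S` of endpoints of `(ε, T)`-chains from `x` is open and absorbs
`(ε, T)`-jumps, so its forward orbit `B` is a trapping region and `A = ⋂_{t ≥ 0} φ(B, t)` is an
attractor. Chain recurrence puts the whole backward orbit of `x` in `S`, so `x ∈ A`; hence
`y ∈ A ⊆ φ(B, T) ⊆ S`. -/

namespace IsFlow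

variable [TopologicalSpace X] {φ : X → ℝ → X}

theorem continuous_apply (hφ : IsFlow φ) (t : ℝ) : Continuous (φ · t) :=
  hφ.1.comp (continuous_id.prodMk continuous_const)

theorem apply_zero (hφ : IsFlow φ) (x : X) : φ x 0 = x := hφ.2.1 x

theorem apply_apply (hφ : IsFlow φ) (x : X) (s t : ℝ) : φ (φ x s) t = φ x (s + t) :=
  hφ.2.2 x s t

theorem apply_neg_apply (hφ : IsFlow φ) (x : X) (t : ℝ) : φ (φ x (-t)) t = x := by
  rw [hφ.apply_apply, neg_add_cancel, hφ.apply_zero]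

theorem apply_apply_neg (hφ : IsFlow φ) (x : X) (t : ℝ) : φ (φ x t) (-t) = x := by
  rw [hφ.apply_apply, add_neg_cancel, hφ.apply_zero]

theorem image_eq_preimage (hφ : IsFlow φ) (t : ℝ) (s : Set X) :
    (φ · t) '' s = (φ · (-t)) ⁻¹' s :=
  congrFun (Set.image_eq_preimage_of_inverse (fun x => hφ.apply_apply_neg x t)
    (fun x => hφ.apply_neg_apply x t)) s

theorem isOpen_image (hφ : IsFlow φ) {s : Set X} (hs : IsOpen s) (t : ℝ) :
    IsOpen ((φ · t) '' s) := by
  rw [hφ.image_eq_preimage]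
  exact hs.preimage (hφ.continuous_apply _)

theorem isClosed_image (hφ : IsFlow φ) {s : Set X} (hs : IsClosed s) (t : ℝ) :
    IsClosed ((φ · t) '' s) := by
  rw [hφ.image_eq_preimage]
  exact hs.preimage (hφ.continuous_apply _)

end IsFlow

namespace IsTrappingFor

variable [TopologicalSpace X] {φ : X → ℝ → X} {A B : Set X}

theorem isInvariant (hB : IsTrappingFor φ A B) (hφ : IsFlow φ) : IsInvariant' φ A := by
  obtain ⟨-, hfwd, -, rfl⟩ := hB
  intro z hz t
  simp only [Set.mem_iInter, Set.mem_Ici, Set.mem_image] at hz ⊢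
  intro s hs
  rcases le_total t s with hts | hst
  · obtain ⟨u, hu, rfl⟩ := hz (s - t) (by linarith)
    exact ⟨u, hu, by rw [hφ.apply_apply, sub_add_cancel]⟩
  · obtain ⟨u, hu, rfl⟩ := hz s hs
    exact ⟨φ u t, hfwd u hu t (by linarith), by rw [hφ.apply_apply, hφ.apply_apply, add_comm]⟩

theorem isClosed (hB : IsTrappingFor φ A B) (hφ : IsFlow φ) : IsClosed A := by
  obtain ⟨-, -, ⟨T, hT, htrap⟩, rfl⟩ := hB
  have hA : ⋂ t ∈ Set.Ici (0 : ℝ), (φ · t) '' B =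
      ⋂ t ∈ Set.Ici (0 : ℝ), (φ · t) '' closure B := by
    refine (Set.iInter₂_mono fun t _ => Set.image_mono subset_closure).antisymm fun z hz => ?_
    simp only [Set.mem_iInter, Set.mem_Ici, Set.mem_image] at hz ⊢
    intro t ht
    obtain ⟨u, hu, rfl⟩ := hz (T + t) (by linarith)
    exact ⟨φ u T, htrap T le_rfl u hu, hφ.apply_apply u T t⟩
  rw [hA]
  exact isClosed_biInter fun t _ => hφ.isClosed_image isClosed_closure t

theorem isAttractorT [CompactSpace X] (hB : IsTrappingFor φ A B) (hφ : IsFlow φ)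
    (hA : A.Nonempty) : IsAttractorT φ A :=
  ⟨(hB.isClosed hφ).isCompact, hA, hB.isInvariant hφ, B, hB⟩

end IsTrappingFor

section Chains

variable [MetricSpace X] {φ : X → ℝ → X} {ε T : ℝ} {x y : X}

theorem IsETChain.mono {ε' T' : ℝ} (h : IsETChain φ ε T x y) (hε : ε ≤ ε') (hT : T' ≤ T) :
    IsETChain φ ε' T' x y := by
  obtain ⟨n, z, t, hn, hz0, hzn, hstep⟩ := h
  exact ⟨n, z, t, hn, hz0, hzn, fun i hi => ⟨hT.trans (hstep i hi).1, (hstep i hi).2.trans_le hε⟩⟩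

theorem isETChain_iff_exists_last_step :
    IsETChain φ ε T x y ↔
      ∃ u, Relation.ReflGen (IsETChain φ ε T) x u ∧ ∃ s, T ≤ s ∧ dist (φ u s) y < ε := by
  constructor
  · rintro ⟨n, z, t, hn, hz0, hzn, hstep⟩
    obtain ⟨m, rfl⟩ := Nat.exists_eq_add_of_le' hn
    refine ⟨z m, ?_, t m, (hstep m (by omega)).1, hzn ▸ (hstep m (by omega)).2⟩
    rcases m with _ | m
    · exact hz0 ▸ .refl
    · exact .single ⟨m + 1, z, t, by omega, hz0, rfl, fun i hi => hstep i (by omega)⟩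
  · rintro ⟨u, hu, s, hs, hy⟩
    rcases hu with _ | ⟨n, z, t, hn, hz0, hzn, hstep⟩
    · refine ⟨1, fun i => if i = 0 then x else y, fun _ => s, le_rfl, rfl, rfl, fun i hi => ?_⟩
      obtain rfl : i = 0 := by omega
      simpa using ⟨hs, hy⟩
    · refine ⟨n + 1, fun i => if i = n + 1 then y else z i, fun i => if i = n then s else t i,
        by omega, by simpa using hz0, by simp, fun i hi => ?_⟩
      obtain rfl | hin : i = n ∨ i < n := by omega
      · simpa [hzn] using ⟨hs, hy⟩
      · simpa [hin.ne, show i ≠ n + 1 by omega] using hstep i hin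

theorem IsETChain.tail {u : X} {s : ℝ} (h : IsETChain φ ε T x u) (hs : T ≤ s)
    (hy : dist (φ u s) y < ε) : IsETChain φ ε T x y :=
  isETChain_iff_exists_last_step.2 ⟨u, .single h, s, hs, hy⟩

theorem isOpen_setOf_isETChain : IsOpen {y | IsETChain φ ε T x y} := by
  rw [Metric.isOpen_iff]
  intro y hy
  obtain ⟨u, hu, s, hs, huy⟩ := isETChain_iff_exists_last_step.1 hy
  refine ⟨ε - dist (φ u s) y, sub_pos.2 huy, fun y' hy' =>
    isETChain_iff_exists_last_step.2 ⟨u, hu, s, hs, ?_⟩⟩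
  rw [Metric.mem_ball, dist_comm] at hy'
  calc dist (φ u s) y' ≤ dist (φ u s) y + dist y y' := dist_triangle _ _ _
    _ < ε := by linarith

theorem Pseudo.flow_right (hxy : Pseudo φ x y) (hφ : IsFlow φ) (s : ℝ) :
    Pseudo φ x (φ y s) := by
  intro ε hε T hT
  obtain ⟨δ, hδ, hcont⟩ := Metric.continuous_iff.1 (hφ.continuous_apply s) y ε hε
  -- retime by `s` the last jump of a `(min ε δ, T + |s|)`-chain from `x` to `y`
  obtain ⟨u, hu, r, hr, huy⟩ := isETChain_iff_exists_last_step.1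
    (hxy (min ε δ) (lt_min hε hδ) (T + |s|) (by positivity))
  have hchain : IsETChain φ (min ε δ) (T + |s|) ≤ IsETChain φ ε T :=
    fun _ _ h => h.mono (min_le_left _ _) (by linarith [abs_nonneg s])
  refine isETChain_iff_exists_last_step.2
    ⟨u, Relation.ReflGen.mono hchain _ _ hu, r + s, by linarith [neg_abs_le s], ?_⟩
  rw [← hφ.apply_apply]
  exact hcont _ (huy.trans_le (min_le_right _ _))

end Chains

def forwardOrbit (φ : X → ℝ → X) (S : Set X) : Set X :=
  ⋃ s ∈ Set.Ici (0 : ℝ), (φ · s) '' S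

section ForwardOrbit

variable {φ : X → ℝ → X} {S : Set X}

theorem mem_forwardOrbit {z : X} : z ∈ forwardOrbit φ S ↔ ∃ s, 0 ≤ s ∧ ∃ u ∈ S, φ u s = z := by
  simp [forwardOrbit]

variable [TopologicalSpace X]

theorem subset_forwardOrbit (hφ : IsFlow φ) : S ⊆ forwardOrbit φ S :=
  fun z hz => mem_forwardOrbit.2 ⟨0, le_rfl, z, hz, hφ.apply_zero z⟩

theorem IsOpen.forwardOrbit (hS : IsOpen S) (hφ : IsFlow φ) : IsOpen (forwardOrbit φ S) :=
  isOpen_biUnion fun s _ => hφ.isOpen_image hS s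

theorem apply_mem_forwardOrbit (hφ : IsFlow φ) {z : X} (hz : z ∈ forwardOrbit φ S) {t : ℝ}
    (ht : 0 ≤ t) : φ z t ∈ forwardOrbit φ S := by
  obtain ⟨s, hs, u, hu, rfl⟩ := mem_forwardOrbit.1 hz
  exact mem_forwardOrbit.2 ⟨s + t, by linarith, u, hu, (hφ.apply_apply u s t).symm⟩

end ForwardOrbit

section Absorbing

variable [MetricSpace X] {φ : X → ℝ → X} {S : Set X} {ε T : ℝ}

theorem apply_mem_of_mem_closure_forwardOrbit (hφ : IsFlow φ)
    (hS : ∀ u ∈ S, ∀ t ≥ T, ∀ z, dist (φ u t) z < ε → z ∈ S) (hε : 0 < ε) {z : X}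
    (hz : z ∈ closure (forwardOrbit φ S)) {t : ℝ} (ht : T ≤ t) : φ z t ∈ S := by
  obtain ⟨δ, hδ, hcont⟩ := Metric.continuous_iff.1 (hφ.continuous_apply t) z ε hε
  obtain ⟨w, hw, hzw⟩ := Metric.mem_closure_iff.1 hz δ hδ
  obtain ⟨s, hs, u, hu, rfl⟩ := mem_forwardOrbit.1 hw
  refine hS u hu (s + t) (by linarith) _ ?_
  rw [← hφ.apply_apply]
  exact hcont _ (by rwa [dist_comm])

theorem isTrappingFor_forwardOrbit (hφ : IsFlow φ) (hS_open : IsOpen S)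
    (hS : ∀ u ∈ S, ∀ t ≥ T, ∀ z, dist (φ u t) z < ε → z ∈ S) (hε : 0 < ε) (hT : 0 < T) :
    IsTrappingFor φ (⋂ t ∈ Set.Ici (0 : ℝ), (φ · t) '' forwardOrbit φ S) (forwardOrbit φ S) :=
  ⟨hS_open.forwardOrbit hφ, fun _ hz _ ht => apply_mem_forwardOrbit hφ hz ht,
    ⟨T, hT, fun _ ht _ hz =>
      subset_forwardOrbit hφ (apply_mem_of_mem_closure_forwardOrbit hφ hS hε hz ht)⟩, rfl⟩

theorem iInter_image_forwardOrbit_subset (hφ : IsFlow φ)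
    (hS : ∀ u ∈ S, ∀ t ≥ T, ∀ z, dist (φ u t) z < ε → z ∈ S) (hε : 0 < ε) (hT : 0 ≤ T) :
    ⋂ t ∈ Set.Ici (0 : ℝ), (φ · t) '' forwardOrbit φ S ⊆ S := by
  intro y hy
  obtain ⟨w, hw, rfl⟩ := Set.mem_iInter₂.1 hy T hT
  exact apply_mem_of_mem_closure_forwardOrbit hφ hS hε (subset_closure hw) le_rfl

end Absorbing

/-- if `x` is chain recurrent and every attractor containing `x` also
contains `y`, then there is a pseudo-orbit from `x` to `y`. -/
theorem pseudo_orbit_of_attractors_subset [MetricSpace X] [CompactSpace X]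
    (φ : X → ℝ → X) (hφ : IsFlow φ) (x y : X) (hx : ChainRec φ x)
    (h : ∀ A : Set X, IsAttractorT φ A → x ∈ A → y ∈ A) :
    Pseudo φ x y := by
  intro ε hε T hT
  set S := {z | IsETChain φ ε T x z}
  have hS : ∀ u ∈ S, ∀ t ≥ T, ∀ z, dist (φ u t) z < ε → z ∈ S :=
    fun _ hu _ ht _ hz => IsETChain.tail hu ht hz
  set A := ⋂ t ∈ Set.Ici (0 : ℝ), (φ · t) '' forwardOrbit φ S
  have hxA : x ∈ A := Set.mem_iInter₂.2 fun t _ =>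
    ⟨φ x (-t), subset_forwardOrbit hφ (Pseudo.flow_right hx hφ (-t) ε hε T hT),
      hφ.apply_neg_apply x t⟩
  have hA : IsAttractorT φ A :=
    (isTrappingFor_forwardOrbit hφ isOpen_setOf_isETChain hS hε hT).isAttractorT hφ ⟨x, hxA⟩
  exact iInter_image_forwardOrbit_subset hφ hS hε hT.le (h A hA hxA)
end

section
/- A finite nonempty intersection of attractors of a flow on a compact metric space is either empty or an attractor. -/
variable {X : Type*}

/-- a finite nonempty intersection of attractors is either empty or
an attractor. -/
theorem finite_inter_attractors [MetricSpace X] [CompactSpace X]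
    (φ : X → ℝ → X) (hφ : IsFlow φ) {ι : Type*} (s : Finset ι) (hs : s.Nonempty)
    (A : ι → Set X) (hA : ∀ i ∈ s, IsAttractorT φ (A i)) :
    (⋂ i ∈ s, A i) = ∅ ∨ IsAttractorT φ (⋂ i ∈ s, A i) := by
  rcases (⋂ i ∈ s, A i).eq_empty_or_nonempty with h | h
  · exact Or.inl h
  right
  obtain ⟨hcont, hzero, hadd⟩ := hφ
  have hB' : ∀ i ∈ s, ∃ B, IsTrappingFor φ (A i) B := fun i hi => (hA i hi).2.2.2
  choose! B hB using hB'
  have himg : ∀ (t : ℝ) (S : Set X) (x : X),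
      x ∈ (fun y => φ y t) '' S ↔ φ x (-t) ∈ S := by
    intro t S x
    constructor
    · rintro ⟨z, hz, rfl⟩
      rw [hadd, add_neg_cancel, hzero]; exact hz
    · intro hxs
      exact ⟨φ x (-t), hxs, by show φ (φ x (-t)) t = x; rw [hadd, neg_add_cancel, hzero]⟩
  choose! T hTpos hTprop using fun i (hi : i ∈ s) => (hB i hi).2.2.1
  have key : ∀ x, ∀ i ∈ s, (x ∈ A i ↔ ∀ t ≥ (0:ℝ), φ x (-t) ∈ B i) := by
    intro x i hi
    rw [(hB i hi).2.2.2]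
    constructor
    · intro hx t ht
      exact (himg t (B i) x).1 (Set.mem_iInter₂.1 hx t ht)
    · intro hx
      exact Set.mem_iInter₂.2 fun t ht => (himg t (B i) x).2 (hx t ht)
  refine ⟨?_, h, ?_, ⋂ i ∈ s, B i, ?_, ?_, ?_, ?_⟩
  · exact (isClosed_biInter fun i hi => (hA i hi).1.isClosed).isCompact
  · intro x hx t
    exact Set.mem_iInter₂.2 fun i hi => (hA i hi).2.2.1 x (Set.mem_iInter₂.1 hx i hi) t
  · exact isOpen_biInter_finset fun i hi => (hB i hi).1
  · intro x hx t ht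
    exact Set.mem_iInter₂.2 fun i hi => (hB i hi).2.1 x (Set.mem_iInter₂.1 hx i hi) t ht
  · obtain ⟨i₀, hi₀⟩ := hs
    refine ⟨s.sup' ⟨i₀, hi₀⟩ T, lt_of_lt_of_le (hTpos i₀ hi₀) (Finset.le_sup' T hi₀), ?_⟩
    intro t ht x hx
    refine Set.mem_iInter₂.2 fun i hi => ?_
    exact hTprop i hi t (le_trans (Finset.le_sup' T hi) ht) x
      (closure_mono (Set.biInter_subset_of_mem hi) hx)
  · ext x
    constructor
    · intro hx
      refine Set.mem_iInter₂.2 fun t ht => (himg t _ x).2 ?_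
      exact Set.mem_iInter₂.2 fun i hi =>
        (key x i hi).1 (Set.mem_iInter₂.1 hx i hi) t ht
    · intro hx
      exact Set.mem_iInter₂.2 fun i hi => (key x i hi).2 fun t ht =>
        Set.mem_iInter₂.1 ((himg t _ x).1 (Set.mem_iInter₂.1 hx t ht)) i hi
end

section
/- In a strict 2×n game with no dominated strategies, every sink strongly connected component of the response graph is a subgame: it equals {A',B'} × T for some nonempty subsets {A',B'} ⊆ {A,B} and T ⊆ {s_1,…,s_n} (i.e., it is a product of strategy subsets). -/
/-- Reachability by directed paths in the graph with arc relation `r`. -/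
def Reaches {V : Type*} (r : V → V → Prop) : V → V → Prop :=
  Relation.ReflTransGen r

/-- `H` is a sink strongly connected component of the graph `r`. -/
def IsSinkComponent {V : Type*} (r : V → V → Prop) (H : Set V) : Prop :=
  (∃ v, H = {w | Reaches r v w ∧ Reaches r w v}) ∧
    ∀ a ∈ H, ∀ b, r a b → b ∈ H

/-- The response graph of a 2×n game with payoffs `u1` (player 1, strategies `Bool`)
and `u2` (player 2, strategies `Fin n`): arcs between comparable profiles point
toward the weakly preferred profile for the deviating player. -/
def ResponseArc2xn {n : ℕ} (u1 u2 : Bool × Fin n → ℝ)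
    (p q : Bool × Fin n) : Prop :=
  (p.1 ≠ q.1 ∧ p.2 = q.2 ∧ u1 p ≤ u1 q) ∨ (p.1 = q.1 ∧ p.2 ≠ q.2 ∧ u2 p ≤ u2 q)

private lemma bool_third (a b x : Bool) (h1 : a ≠ b) (h2 : x ≠ b) : x = a := by
  revert h1 h2; revert a b x; decide

private lemma bool_two (a b : Bool) (h : a ≠ b) : ∀ c : Bool, c = a ∨ c = b := by
  revert h; revert a b; decide

/-- in a strict 2×n game with no dominated strategies, every sink
strongly connected component of the response graph is a subgame, i.e. a product of
nonempty subsets of the two players' strategy sets. -/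
theorem sink_component_is_subgame {n : ℕ} (u1 u2 : Bool × Fin n → ℝ)
    (hstrict1 : ∀ (a b : Bool) (s : Fin n), a ≠ b → u1 (a, s) ≠ u1 (b, s))
    (hstrict2 : ∀ (a : Bool) (s t : Fin n), s ≠ t → u2 (a, s) ≠ u2 (a, t))
    (hundom1 : ¬∃ a b : Bool, a ≠ b ∧ ∀ s : Fin n, u1 (b, s) < u1 (a, s))
    (hundom2 : ¬∃ s t : Fin n, s ≠ t ∧ ∀ a : Bool, u2 (a, t) < u2 (a, s))
    (H : Set (Bool × Fin n)) (hH : IsSinkComponent (ResponseArc2xn u1 u2) H) :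
    ∃ (P : Set Bool) (T : Set (Fin n)), P.Nonempty ∧ T.Nonempty ∧ H = P ×ˢ T := by
  obtain ⟨⟨v, hv⟩, hclosed⟩ := hH
  have hvH : v ∈ H := by rw [hv]; exact ⟨Relation.ReflTransGen.refl, Relation.ReflTransGen.refl⟩
  have hconn : ∀ p ∈ H, ∀ q ∈ H, Reaches (ResponseArc2xn u1 u2) p q := by
    intro p hp q hq
    rw [hv] at hp hq
    exact Relation.ReflTransGen.trans hp.2 hq.1
  -- crux: H is "rectangular"
  have crux : ∀ (a : Bool) (s : Fin n) (b : Bool) (t : Fin n),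
      (a, s) ∈ H → (b, t) ∈ H → (a, t) ∈ H := by
    intro a s b t has hbt
    by_cases hab : a = b
    · subst hab; exact hbt
    have : Nonempty (Fin n) := ⟨t⟩
    obtain ⟨tm, htm⟩ := Finite.exists_max (fun x => u2 (b, x))
    -- the player-2 best column of row b is in H
    have htmb : (b, tm) ∈ H := by
      by_cases h : t = tm
      · subst h; exact hbt
      · exact hclosed _ hbt _ (Or.inr ⟨rfl, h, htm t⟩)
    -- and also its mirror in row a
    have htma : (a, tm) ∈ H := by
      by_cases h : u1 (b, tm) ≤ u1 (a, tm)
      · exact hclosed _ htmb _ (Or.inl ⟨Ne.symm hab, rfl, h⟩)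
      · exfalso
        have hr := hconn _ htmb _ has
        rcases Relation.ReflTransGen.cases_head hr with heq | ⟨q, harc, _⟩
        · exact hab (congrArg Prod.fst heq).symm
        · rcases harc with ⟨hne, heq, hle⟩ | ⟨heq1, hne, hle⟩
          · have hq : q = (a, tm) := by
              have h1 : q.1 = a := bool_third a b q.1 hab (Ne.symm hne)
              have h2 : q.2 = tm := heq.symm
              exact Prod.ext h1 h2
            rw [hq] at hle; exact h hle
          · rw [show q = (b, q.2) from Prod.ext heq1.symm rfl] at hle
            have := htm q.2
            have hne2 : u2 (b, tm) ≠ u2 (b, q.2) := hstrict2 b tm q.2 hne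
            exact hne2 (le_antisymm hle this)
    -- finally (a, t) ∈ H
    by_cases h : t = tm
    · subst h; exact htma
    by_contra hta
    have h1 : ¬ u2 (a, tm) ≤ u2 (a, t) := fun hle =>
      hta (hclosed _ htma _ (Or.inr ⟨rfl, Ne.symm h, hle⟩))
    have h1' : u2 (a, t) < u2 (a, tm) := lt_of_not_ge h1
    have h2 : u2 (b, t) < u2 (b, tm) := lt_of_le_of_ne (htm t) (hstrict2 b t tm h)
    refine hundom2 ⟨tm, t, Ne.symm h, fun c => ?_⟩
    rcases bool_two a b hab c with rfl | rfl
    · exact h1'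
    · exact h2
  refine ⟨Prod.fst '' H, Prod.snd '' H, ⟨v.1, v, hvH, rfl⟩, ⟨v.2, v, hvH, rfl⟩, ?_⟩
  ext ⟨a, t⟩
  simp only [Set.mem_prod, Set.mem_image]
  constructor
  · intro h; exact ⟨⟨(a, t), h, rfl⟩, ⟨(a, t), h, rfl⟩⟩
  · rintro ⟨⟨⟨a', s⟩, hp, rfl⟩, ⟨⟨b, t'⟩, hq, rfl⟩⟩
    exact crux a' s b t' hp hq
end

section
/- Suppose every point of the boundary of a compact invariant region Y of a flow lies in a single chain component K, and the flow has no attractors and no repellors contained in the interior of Y. Then Y contains no attractor of the restricted flow other than possibly Y itself, and in fact every point of Y is chain equivalent to the points of K (all of Y lies in K). -/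
variable {X : Type*}

/-- A repellor (trapping-region definition): an attractor of the time-reversed flow. -/
def IsRepellorT [TopologicalSpace X] (φ : X → ℝ → X) (A : Set X) : Prop :=
  IsAttractorT (fun x t => φ x (-t)) A

/-- `K` is a chain component of `φ`: an equivalence class of chain-equivalent
(chain recurrent) points. -/
def IsChainComponent [MetricSpace X] (φ : X → ℝ → X) (K : Set X) : Prop :=
  ∃ x₀, ChainRec φ x₀ ∧ K = {y | Pseudo φ x₀ y ∧ Pseudo φ y x₀}

section ChainLemmas
variable [MetricSpace X] {φ : X → ℝ → X} {ε ε' δ T : ℝ} {S S' : Set ℝ} {x y w : X}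

def ChainIn (φ : X → ℝ → X) (ε : ℝ) (S : Set ℝ) (x y : X) : Prop :=
  ∃ (n : ℕ) (z : ℕ → X) (t : ℕ → ℝ), 1 ≤ n ∧ z 0 = x ∧ z n = y ∧
    ∀ i < n, t i ∈ S ∧ dist (φ (z i) (t i)) (z (i + 1)) < ε

lemma isETChain_iff_chainIn : IsETChain φ ε T x y ↔ ChainIn φ ε (Set.Ici T) x y := by
  constructor <;> rintro ⟨n, z, t, hn, h0, hn', hj⟩ <;>
    exact ⟨n, z, t, hn, h0, hn', fun i hi => ⟨(hj i hi).1, (hj i hi).2⟩⟩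

lemma chainIn_single {t : ℝ} (ht : t ∈ S) (hd : dist (φ x t) y < ε) :
    ChainIn φ ε S x y := by
  refine ⟨1, fun i => if i = 0 then x else y, fun _ => t, le_refl _, by simp, by simp, ?_⟩
  intro i hi
  interval_cases i
  simpa using ⟨ht, hd⟩

lemma chainIn_concat (h1 : ChainIn φ ε S x y) (h2 : ChainIn φ ε S y w) :
    ChainIn φ ε S x w := by
  obtain ⟨n, z, t, hn, h0, hn', hj⟩ := h1
  obtain ⟨m, z', t', hm, h0', hm', hj'⟩ := h2
  set Z : ℕ → X := fun i => if i ≤ n then z i else z' (i - n) with hZdef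
  set Tt : ℕ → ℝ := fun i => if i < n then t i else t' (i - n) with hTdef
  have hZ : ∀ i, n ≤ i → Z i = z' (i - n) := by
    intro i hi
    by_cases h : i ≤ n
    · have hin : i = n := le_antisymm h hi
      simp [hZdef, hin, hn', h0']
    · simp [hZdef, h]
  refine ⟨n + m, Z, Tt, by omega, ?_, ?_, ?_⟩
  · simp [hZdef, h0]
  · rw [hZ (n + m) (by omega)]
    simpa using hm'
  · intro i hi
    by_cases h : i < n
    · have h1' : i ≤ n := le_of_lt h
      have h2' : i + 1 ≤ n := h
      have eZi : Z i = z i := by simp [hZdef, h1']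
      have eZi1 : Z (i + 1) = z (i + 1) := by simp [hZdef, h2']
      have eT : Tt i = t i := by simp [hTdef, h]
      rw [eZi, eZi1, eT]
      exact hj i h
    · have hni : n ≤ i := le_of_not_gt h
      have e1 : Z i = z' (i - n) := hZ i hni
      have e2 : Z (i + 1) = z' ((i - n) + 1) := by
        rw [hZ (i + 1) (by omega)]
        congr 1
        omega
      have eT : Tt i = t' (i - n) := by simp [hTdef, h]
      rw [e1, e2, eT]
      exact hj' (i - n) (by omega)

lemma chainIn_mono (hε : ε ≤ ε') (hS : S ⊆ S') (h : ChainIn φ ε S x y) :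
    ChainIn φ ε' S' x y := by
  obtain ⟨n, z, t, hn, h0, hn', hj⟩ := h
  exact ⟨n, z, t, hn, h0, hn', fun i hi =>
    ⟨hS (hj i hi).1, lt_of_lt_of_le (hj i hi).2 hε⟩⟩

/-- exact orbit chains: from `x` to `φ x ((m+1) * τ)` with all jump times `τ`. -/
lemma chainIn_exact [TopologicalSpace X] (hφ : IsFlow φ) (hε : 0 < ε) {τ : ℝ}
    (hτ : τ ∈ S) : ∀ m : ℕ, ChainIn φ ε S x (φ x (((m : ℝ) + 1) * τ)) := by
  intro m
  induction m with
  | zero =>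
    refine chainIn_single hτ ?_
    have : φ x τ = φ x (((0 : ℝ) + 1) * τ) := by norm_num
    rw [this]
    simpa using hε
  | succ k ih =>
    refine chainIn_concat ih (chainIn_single hτ ?_)
    have : φ (φ x (((k : ℝ) + 1) * τ)) τ = φ x (((k : ℝ) + 1 + 1) * τ) := by
      rw [hφ.2.2]; ring_nf
    rw [this]
    push_cast
    simpa using hε

/-- decomposition of a time `t ≥ T` into `m+1` equal pieces in `[T, 2T]`. -/
lemma exists_time_decomp {t T : ℝ} (hT : 0 < T) (ht : T ≤ t) :
    ∃ m : ℕ, t / ((m : ℝ) + 1) ∈ Set.Icc T (2 * T) ∧ ((m : ℝ) + 1) * (t / ((m : ℝ) + 1)) = t := by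
  have ht0 : 0 < t := lt_of_lt_of_le hT ht
  have hdiv : (1 : ℝ) ≤ t / T := (one_le_div hT).2 ht
  set k := ⌊t / T⌋₊ with hk
  have hk1 : 1 ≤ k := Nat.le_floor (by exact_mod_cast hdiv)
  have hkle : (k : ℝ) ≤ t / T := Nat.floor_le (by positivity)
  have hklt : t / T < (k : ℝ) + 1 := Nat.lt_floor_add_one _
  have hkpos : (0 : ℝ) < k := by exact_mod_cast hk1
  refine ⟨k - 1, ?_, ?_⟩
  · have hcast : ((k - 1 : ℕ) : ℝ) + 1 = (k : ℝ) := by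
      have : ((k - 1 : ℕ) : ℝ) = (k : ℝ) - 1 := by
        push_cast [Nat.cast_sub hk1]; ring
      rw [this]; ring
    rw [hcast]
    constructor
    · rw [le_div_iff₀ hkpos]
      calc T * (k : ℝ) ≤ (t / T) * T := by nlinarith
        _ = t := by field_simp
    · rw [div_le_iff₀ hkpos]
      have h2 : t < ((k : ℝ) + 1) * T := by
        have := (div_lt_iff₀ hT).1 hklt
        linarith
      have h3 : ((k : ℝ) + 1) * T ≤ 2 * T * (k : ℝ) := by nlinarith [hkpos]
      linarith
  · field_simp

/-- splitting one long jump into jumps with times in `[T, 2T]`. -/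
lemma chainIn_split [TopologicalSpace X] (hφ : IsFlow φ) {t : ℝ} (hT : 0 < T) (htT : T ≤ t)
    (hd : dist (φ x t) y < ε) : ChainIn φ ε (Set.Icc T (2 * T)) x y := by
  have hε : 0 < ε := lt_of_le_of_lt dist_nonneg hd
  obtain ⟨m, hτ, hmt⟩ := exists_time_decomp hT htT
  set τ := t / ((m : ℝ) + 1) with hτdef
  cases m with
  | zero =>
    refine chainIn_single hτ ?_
    have : τ = t := by
      rw [hτdef]; norm_num
    rwa [this]
  | succ k =>
    refine chainIn_concat (chainIn_exact hφ hε hτ k) (chainIn_single hτ ?_)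
    have : φ (φ x (((k : ℝ) + 1) * τ)) τ = φ x t := by
      rw [hφ.2.2, ← hmt]
      push_cast
      ring_nf
    rwa [this]

/-- refinement: an `(ε,T)`-chain yields a chain with all jump times in `[T,2T]`. -/
lemma isETChain_to_Icc [TopologicalSpace X] (hφ : IsFlow φ) (hT : 0 < T)
    (h : IsETChain φ ε T x y) : ChainIn φ ε (Set.Icc T (2 * T)) x y := by
  obtain ⟨n, z, t, hn, h0, hn', hj⟩ := h
  obtain ⟨n', rfl⟩ : ∃ n', n = n' + 1 := ⟨n - 1, by omega⟩
  clear hn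
  subst h0 hn'
  induction n' with
  | zero => exact chainIn_split hφ hT (hj 0 (by omega)).1 (hj 0 (by omega)).2
  | succ k ih =>
    have hpref : ChainIn φ ε (Set.Icc T (2 * T)) (z 0) (z (k + 1)) :=
      ih (fun i hi => hj i (by omega))
    exact chainIn_concat hpref
      (chainIn_split hφ hT (hj (k+1) (by omega)).1 (hj (k+1) (by omega)).2)
end ChainLemmas

section FlowLemmas
variable [MetricSpace X] {φ : X → ℝ → X}

lemma isFlow_reverse [TopologicalSpace Y] {ψ : Y → ℝ → Y} (h : IsFlow ψ) :
    IsFlow (fun x t => ψ x (-t)) := by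
  obtain ⟨hc, h0, hadd⟩ := h
  refine ⟨?_, ?_, ?_⟩
  · have : (fun p : Y × ℝ => ψ p.1 (-p.2)) =
        (fun p : Y × ℝ => ψ p.1 p.2) ∘ (fun p : Y × ℝ => (p.1, -p.2)) := rfl
    exact this ▸ hc.comp (continuous_fst.prodMk continuous_snd.neg)
  · intro x; simpa using h0 x
  · intro x s t
    show ψ (ψ x (-s)) (-t) = ψ x (-(s + t))
    rw [hadd]
    congr 1
    ring

lemma reverse_reverse {Y : Type*} {ψ : Y → ℝ → Y} :
    (fun (x : Y) (t : ℝ) => (fun (x : Y) (t : ℝ) => ψ x (-t)) x (-t)) = ψ := by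
  funext x t
  simp

/-- uniform continuity over a compact time window. -/
lemma flow_uniform_window [MetricSpace X] [CompactSpace X] {ψ : X → ℝ → X}
    (hc : Continuous (fun p : X × ℝ => ψ p.1 p.2)) {T ε : ℝ} (hT : 0 < T) (hε : 0 < ε) :
    ∃ δ > 0, ∀ a b : X, dist a b < δ → ∀ τ ∈ Set.Icc T (2 * T),
      dist (ψ a τ) (ψ b τ) < ε := by
  have hcs : CompactSpace (X × Set.Icc T (2 * T)) := by infer_instance
  set F : X × Set.Icc T (2 * T) → X := fun q => ψ q.1 (q.2 : ℝ) with hF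
  have hFc : Continuous F := hc.comp (continuous_fst.prodMk (continuous_subtype_val.comp continuous_snd))
  have hFu : UniformContinuous F := CompactSpace.uniformContinuous_of_continuous hFc
  obtain ⟨δ, hδ0, hδ⟩ := Metric.uniformContinuous_iff.1 hFu ε hε
  refine ⟨δ, hδ0, ?_⟩
  intro a b hab τ hτ
  have hde : dist ((a, ⟨τ, hτ⟩) : X × Set.Icc T (2 * T)) (b, ⟨τ, hτ⟩) = dist a b := by
    rw [Prod.dist_eq, Subtype.dist_eq]
    simp [max_eq_left dist_nonneg]
  exact hδ (by rw [hde]; exact hab)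
end FlowLemmas

section Reverse
variable [MetricSpace X] {φ : X → ℝ → X} {ε δ T : ℝ} {x y : X}

lemma chainIn_reverse [MetricSpace X] (hφ : IsFlow φ)
    (hδε : ∀ a b : X, dist a b < δ → ∀ τ ∈ Set.Icc T (2 * T),
      dist (φ a (-τ)) (φ b (-τ)) < ε)
    (h : ChainIn φ δ (Set.Icc T (2 * T)) x y) :
    ChainIn (fun a s => φ a (-s)) ε (Set.Icc T (2 * T)) y x := by
  obtain ⟨n, z, t, hn, h0, hn', hj⟩ := h
  refine ⟨n, fun j => z (n - j), fun j => t (n - 1 - j), hn, by simp [hn'], by simp [h0], ?_⟩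
  intro j hj'
  set i := n - 1 - j with hi
  have hin : i < n := by omega
  obtain ⟨hti, hdi⟩ := hj i hin
  refine ⟨hti, ?_⟩
  have e1 : n - j = i + 1 := by omega
  have e2 : n - (j + 1) = i := by omega
  show dist (φ (z (n - j)) (-(t (n - 1 - j)))) (z (n - (j + 1))) < ε
  rw [e1, e2, ← hi]
  have key := hδε _ _ hdi (t i) hti
  have : φ (φ (z i) (t i)) (-(t i)) = z i := by
    rw [hφ.2.2]
    simpa using hφ.2.1 (z i)
  rw [this] at key
  calc dist (φ (z (i + 1)) (-(t i))) (z i)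
      = dist (z i) (φ (z (i + 1)) (-(t i))) := dist_comm _ _
    _ < ε := key

lemma pseudo_reverse [CompactSpace X] (hφ : IsFlow φ) (h : Pseudo φ x y) :
    Pseudo (fun a s => φ a (-s)) y x := by
  intro ε hε T hT
  obtain ⟨δ, hδ0, hδ⟩ := flow_uniform_window (X := X)
    (ψ := fun a s => φ a (-s)) ((isFlow_reverse hφ).1) hT hε
  have hchain : IsETChain φ δ T x y := h δ hδ0 T hT
  have h1 : ChainIn φ δ (Set.Icc T (2 * T)) x y := isETChain_to_Icc hφ hT hchain
  have h2 : ChainIn (fun a s => φ a (-s)) ε (Set.Icc T (2 * T)) y x :=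
    chainIn_reverse hφ (fun a b hab τ hτ => hδ a b hab τ hτ) h1
  exact isETChain_iff_chainIn.2 (chainIn_mono le_rfl (fun τ hτ => hτ.1) h2)

lemma pseudo_forward [CompactSpace X] (hφ : IsFlow φ)
    (h : Pseudo (fun a s => φ a (-s)) x y) : Pseudo φ y x := by
  have := pseudo_reverse (isFlow_reverse hφ) h
  rwa [reverse_reverse] at this

lemma pseudo_trans {x y w : X} (h1 : Pseudo φ x y) (h2 : Pseudo φ y w) : Pseudo φ x w := by
  intro ε hε T hT
  exact isETChain_iff_chainIn.2 (chainIn_concat (isETChain_iff_chainIn.1 (h1 ε hε T hT))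
    (isETChain_iff_chainIn.1 (h2 ε hε T hT)))
end Reverse

section Helpers
variable [MetricSpace X] {φ : X → ℝ → X} {ε T : ℝ} {u : X}

lemma flow_cont_right {X : Type*} [TopologicalSpace X] {φ : X → ℝ → X}
    (hc : Continuous (fun p : X × ℝ => φ p.1 p.2)) (t : ℝ) :
    Continuous (fun x => φ x t) :=
  hc.comp (continuous_id.prodMk continuous_const)

lemma mem_image_flow {X : Type*} [TopologicalSpace X] {φ : X → ℝ → X} (hφ : IsFlow φ)
    {t : ℝ} {S : Set X} {x : X} :
    x ∈ (fun y => φ y t) '' S ↔ φ x (-t) ∈ S := by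
  constructor
  · rintro ⟨b, hb, rfl⟩
    have hb' : φ (φ b t) (-t) = b := by rw [hφ.2.2]; simpa using hφ.2.1 b
    rwa [hb']
  · intro h
    refine ⟨φ x (-t), h, ?_⟩
    show φ (φ x (-t)) t = x
    rw [hφ.2.2]; simpa using hφ.2.1 x

lemma isETChain_extend {v w : X} {t : ℝ} (h : IsETChain φ ε T u v) (ht : T ≤ t)
    (hd : dist (φ v t) w < ε) : IsETChain φ ε T u w :=
  isETChain_iff_chainIn.2 (chainIn_concat (isETChain_iff_chainIn.1 h)
    (chainIn_single (Set.mem_Ici.2 ht) hd))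

lemma isOpen_chainTarget : IsOpen {v | IsETChain φ ε T u v} := by
  rw [Metric.isOpen_iff]
  rintro v ⟨n, z, t, hn, h0, hn', hj⟩
  obtain ⟨m, rfl⟩ : ∃ m, n = m + 1 := ⟨n - 1, by omega⟩
  have hd := (hj m (by omega)).2
  rw [hn'] at hd
  refine ⟨ε - dist (φ (z m) (t m)) v, by linarith, ?_⟩
  intro v' hv'
  rw [Metric.mem_ball] at hv'
  refine ⟨m + 1, Function.update z (m+1) v', t, by omega, ?_, ?_, ?_⟩
  · rw [Function.update_of_ne (by omega : (0:ℕ) ≠ m + 1)]; exact h0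
  · exact Function.update_self _ _ _
  · intro i hi
    have hzi : Function.update z (m+1) v' i = z i :=
      Function.update_of_ne (by omega) _ _
    by_cases him : i = m
    · subst him
      rw [hzi, Function.update_self]
      refine ⟨(hj i (by omega)).1, ?_⟩
      have htri : dist (φ (z i) (t i)) v' ≤ dist (φ (z i) (t i)) v + dist v v' :=
        dist_triangle _ _ _
      have hcomm : dist v v' = dist v' v := dist_comm _ _
      linarith
    · have hii : i + 1 ≠ m + 1 := by omega
      rw [hzi, Function.update_of_ne hii]
      exact hj i hi
end Helpers




/-- MAIN LEMMA: if every attractor meets `S` and every point of `S` has a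
pseudo-orbit to `x₀`, then every point has a pseudo-orbit to `x₀`. -/
lemma pseudo_to_base [MetricSpace X] [CompactSpace X] {φ : X → ℝ → X} (hφ : IsFlow φ)
    (x₀ : X) (S : Set X)
    (hA : ∀ A : Set X, IsAttractorT φ A → (A ∩ S).Nonempty)
    (hS : ∀ a ∈ S, Pseudo φ a x₀) : ∀ u : X, Pseudo φ u x₀ := by
  intro u ε hε T hT
  obtain ⟨δ, hδ0, hδ⟩ := flow_uniform_window (ψ := φ) hφ.1 hT hε
  set P : Set X := {v | IsETChain φ ε T u v} with hPdef
  have hPext : ∀ v ∈ P, ∀ t : ℝ, T ≤ t → ∀ w : X, dist (φ v t) w < ε → w ∈ P :=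
    fun v hv t ht w hd => isETChain_extend hv ht hd
  have hPu : φ u T ∈ P := by
    refine isETChain_iff_chainIn.2 (chainIn_single (Set.mem_Ici.2 le_rfl) ?_)
    simpa using hε
  -- step over the closure for one time window
  have hstep : ∀ w ∈ closure P, ∀ τ ∈ Set.Icc T (2 * T), φ w τ ∈ P := by
    intro w hw τ hτ
    obtain ⟨v, hv, hdist⟩ := Metric.mem_closure_iff.1 hw δ hδ0
    have h1 : dist (φ v τ) (φ w τ) < ε := by
      have := hδ v w (by rwa [dist_comm] at hdist) τ hτ
      exact this
    exact hPext v hv τ hτ.1 (φ w τ) h1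
  -- arbitrary long times
  have hPC : ∀ w ∈ closure P, ∀ t : ℝ, T ≤ t → φ w t ∈ P := by
    intro w hw t ht
    obtain ⟨m, hτIcc, hmt⟩ := exists_time_decomp hT ht
    set τ := t / ((m : ℝ) + 1) with hτdef
    have claim : ∀ k : ℕ, φ w (((k : ℝ) + 1) * τ) ∈ P := by
      intro k
      induction k with
      | zero =>
        have h1 : ((0 : ℕ) : ℝ) + 1 = 1 := by norm_num
        rw [h1, one_mul]
        exact hstep w hw τ hτIcc
      | succ k ih =>
        have h1 : φ w ((((k + 1 : ℕ) : ℝ) + 1) * τ) = φ (φ w (((k : ℝ) + 1) * τ)) τ := by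
          rw [hφ.2.2]
          congr 1
          push_cast
          ring
        rw [h1]
        exact hstep _ (subset_closure ih) τ hτIcc
    have := claim m
    rwa [hmt] at this
  have hPopen : IsOpen P := isOpen_chainTarget
  -- the trapping region
  set B : Set X := {x | ∃ s : ℝ, 0 ≤ s ∧ φ x (-s) ∈ P} with hBdef
  have hPB : P ⊆ B := by
    intro x hx
    exact ⟨0, le_rfl, by rw [neg_zero, hφ.2.1]; exact hx⟩
  have hBopen : IsOpen B := by
    have hBeq : B = ⋃ s ∈ Set.Ici (0 : ℝ), (fun x => φ x (-s)) ⁻¹' P := by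
      ext x
      simp only [hBdef, Set.mem_setOf_eq, Set.mem_iUnion, Set.mem_preimage, Set.mem_Ici,
        exists_prop]
    rw [hBeq]
    exact isOpen_biUnion fun s _ => hPopen.preimage (flow_cont_right hφ.1 (-s))
  have hBfwd : ∀ x ∈ B, ∀ t ≥ (0:ℝ), φ x t ∈ B := by
    rintro x ⟨s, hs0, hsP⟩ t ht
    refine ⟨s + t, by linarith, ?_⟩
    rw [hφ.2.2]
    have harg : t + -(s + t) = -s := by ring
    rw [harg]
    exact hsP
  have hPclC : IsCompact (closure P) := isClosed_closure.isCompact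
  set B₀ : Set X := (fun q : X × ℝ => φ q.1 q.2) '' ((closure P) ×ˢ Set.Icc (0:ℝ) T) with hB₀def
  have hB₀comp : IsCompact B₀ := (hPclC.prod isCompact_Icc).image hφ.1
  have hBB₀ : B ⊆ B₀ := by
    rintro x ⟨s, hs0, hsP⟩
    by_cases hsT : s ≤ T
    · refine ⟨(φ x (-s), s), ⟨subset_closure hsP, hs0, hsT⟩, ?_⟩
      show φ (φ x (-s)) s = x
      rw [hφ.2.2]
      simpa using hφ.2.1 x
    · push_neg at hsT
      set r := min T (s - T) with hrdef
      have hr0 : 0 ≤ r := le_min (le_of_lt hT) (by linarith)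
      have hrT : r ≤ T := min_le_left _ _
      have hrs : r ≤ s - T := min_le_right _ _
      have hjump : T ≤ s - r := by linarith
      have hq : φ (φ x (-s)) (s - r) ∈ P := hPC _ (subset_closure hsP) _ hjump
      refine ⟨(φ (φ x (-s)) (s - r), r), ⟨subset_closure hq, hr0, hrT⟩, ?_⟩
      show φ (φ (φ x (-s)) (s - r)) r = x
      rw [hφ.2.2, hφ.2.2]
      have harg : -s + (s - r + r) = 0 := by ring
      rw [harg]
      exact hφ.2.1 x
  have hclB : closure B ⊆ B₀ := closure_minimal hBB₀ hB₀comp.isClosed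
  have htrap : ∀ t ≥ T, ∀ x ∈ closure B, φ x t ∈ B := by
    intro t ht x hx
    obtain ⟨⟨p, s⟩, ⟨hp, hs⟩, hps⟩ := hclB hx
    have he : φ x t = φ p (s + t) := by
      rw [← hps]
      exact hφ.2.2 p s t
    rw [he]
    exact hPB (hPC p hp (s + t) (by have := hs.1; linarith))
  have hBne : B.Nonempty := ⟨φ u T, hPB hPu⟩
  set A : Set X := ⋂ t ∈ Set.Ici (0 : ℝ), (fun x => φ x t) '' B with hAdef
  have hmemA : ∀ x : X, x ∈ A ↔ ∀ t : ℝ, 0 ≤ t → φ x (-t) ∈ B := by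
    intro x
    simp only [hAdef, Set.mem_iInter, Set.mem_Ici]
    constructor
    · intro h t ht
      exact (mem_image_flow hφ).1 (h t ht)
    · intro h t ht
      exact (mem_image_flow hφ).2 (h t ht)
  have hAP : A ⊆ P := by
    intro x hx
    obtain ⟨s, hs0, hsP⟩ := (hmemA x).1 hx T (le_of_lt hT)
    have harg : φ (φ x (-T)) (-s) = φ x (-(T + s)) := by
      rw [hφ.2.2]
      congr 1
      ring
    rw [harg] at hsP
    have hx' : φ (φ x (-(T + s))) (T + s) ∈ P :=
      hPC _ (subset_closure hsP) _ (by linarith)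
    have he : φ (φ x (-(T + s))) (T + s) = x := by
      rw [hφ.2.2, show -(T + s) + (T + s) = (0:ℝ) by ring]
      exact hφ.2.1 x
    rwa [he] at hx'
  have hCinv : ∀ w ∈ closure B, ∀ t : ℝ, 0 ≤ t → φ w t ∈ closure B := by
    intro w hw t ht
    have h1 : φ w t ∈ (fun y => φ y t) '' closure B := Set.mem_image_of_mem _ hw
    have h2 : (fun y => φ y t) '' closure B ⊆ closure ((fun y => φ y t) '' B) :=
      image_closure_subset_closure_image (flow_cont_right hφ.1 t)
    have h3 : (fun y => φ y t) '' B ⊆ B := by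
      rintro _ ⟨b, hb, rfl⟩
      exact hBfwd b hb t ht
    exact closure_mono h3 (h2 h1)
  set D : ℕ → Set X := fun n => (fun x => φ x ((n : ℝ) + T)) '' closure B with hDdef
  have hclBcomp : IsCompact (closure B) := isClosed_closure.isCompact
  have hDcomp : ∀ n, IsCompact (D n) := fun n => hclBcomp.image (flow_cont_right hφ.1 _)
  have hDne : ∀ n, (D n).Nonempty := by
    intro n
    obtain ⟨b, hb⟩ := hBne
    exact ⟨_, Set.mem_image_of_mem _ (subset_closure hb)⟩
  have hDmono : ∀ n, D (n + 1) ⊆ D n := by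
    rintro n _ ⟨c, hc, rfl⟩
    refine ⟨φ c 1, hCinv c hc 1 zero_le_one, ?_⟩
    show φ (φ c 1) ((n : ℝ) + T) = φ c (((n + 1 : ℕ) : ℝ) + T)
    rw [hφ.2.2]
    congr 1
    push_cast
    ring
  have hAD : A = ⋂ n, D n := by
    apply subset_antisymm
    · intro x hx
      rw [Set.mem_iInter]
      intro n
      have h1 : φ x (-((n : ℝ) + T)) ∈ B := (hmemA x).1 hx _ (by positivity)
      exact (mem_image_flow hφ).2 (subset_closure h1)
    · intro x hx
      rw [Set.mem_iInter] at hx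
      rw [hmemA]
      intro t ht
      obtain ⟨n, hn⟩ := exists_nat_ge t
      have hc : φ x (-((n : ℝ) + T)) ∈ closure B := (mem_image_flow hφ).1 (hx n)
      have he : φ x (-t) = φ (φ x (-((n : ℝ) + T))) ((n : ℝ) + T - t) := by
        rw [hφ.2.2]
        congr 1
        ring
      rw [he]
      exact htrap _ (by linarith) _ hc
  have hAcomp : IsCompact A := by
    rw [hAD]
    exact (hDcomp 0).of_isClosed_subset (isClosed_iInter fun n => (hDcomp n).isClosed)
      (Set.iInter_subset _ 0)
  have hAne : A.Nonempty := by
    rw [hAD]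
    exact IsCompact.nonempty_iInter_of_sequence_nonempty_isCompact_isClosed D hDmono hDne
      (hDcomp 0) (fun n => (hDcomp n).isClosed)
  have hAinv : IsInvariant' φ A := by
    intro x hx t
    rw [hmemA]
    intro s hs
    rcases le_or_gt t s with h | h
    · have he : φ (φ x t) (-s) = φ x (-(s - t)) := by
        rw [hφ.2.2]
        congr 1
        ring
      rw [he]
      exact (hmemA x).1 hx (s - t) (by linarith)
    · have hxB : x ∈ B := by
        have := (hmemA x).1 hx 0 le_rfl
        rwa [neg_zero, hφ.2.1] at this
      have he : φ (φ x t) (-s) = φ x (t - s) := by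
        rw [hφ.2.2, show t + -s = t - s by ring]
      rw [he]
      exact hBfwd x hxB (t - s) (by linarith)
  have hAatt : IsAttractorT φ A :=
    ⟨hAcomp, hAne, hAinv, B, hBopen, hBfwd, ⟨T, hT, htrap⟩, rfl⟩
  obtain ⟨a, haA, haS⟩ := hA A hAatt
  have hchain1 : IsETChain φ ε T u a := hAP haA
  have hchain2 : IsETChain φ ε T a x₀ := hS a haS ε hε T hT
  exact isETChain_iff_chainIn.2 (chainIn_concat (isETChain_iff_chainIn.1 hchain1)
    (isETChain_iff_chainIn.1 hchain2))


/-- let `φ` be a flow on a compact metric space `Y` (the restricted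
flow on an invariant subgame), with `bd` the boundary of `Y`.  If every attractor
and every repellor of `φ` meets `bd`, and `bd` lies in a single chain component
`K`, then the only possible attractor of `φ` is all of `Y`, and every point of `Y`
lies in `K`. -/
theorem boundary_chain_component_fills_space [MetricSpace X] [CompactSpace X]
    (φ : X → ℝ → X) (hφ : IsFlow φ) (bd : Set X) (hbdne : bd.Nonempty)
    (hA : ∀ A : Set X, IsAttractorT φ A → (A ∩ bd).Nonempty)
    (hR : ∀ R : Set X, IsRepellorT φ R → (R ∩ bd).Nonempty)
    (K : Set X) (hK : IsChainComponent φ K) (hbdK : bd ⊆ K) :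
    (∀ A : Set X, IsAttractorT φ A → A = Set.univ) ∧ K = Set.univ := by
  obtain ⟨x₀, hx₀rec, hKeq⟩ := hK
  have h1 : ∀ u : X, Pseudo φ u x₀ := by
    refine pseudo_to_base hφ x₀ bd hA ?_
    intro a ha
    have := hbdK ha
    rw [hKeq] at this
    exact this.2
  have h2 : ∀ u : X, Pseudo (fun x t => φ x (-t)) u x₀ := by
    refine pseudo_to_base (isFlow_reverse hφ) x₀ bd (fun A h => hR A h) ?_
    intro a ha
    have haK := hbdK ha
    rw [hKeq] at haK
    exact pseudo_reverse hφ haK.1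
  have h2' : ∀ u : X, Pseudo φ x₀ u := fun u => pseudo_forward hφ (h2 u)
  have hKuniv : K = Set.univ := by
    rw [hKeq]
    apply Set.eq_univ_of_forall
    intro y
    exact ⟨h2' y, h1 y⟩
  refine ⟨?_, hKuniv⟩
  intro A hAatt
  obtain ⟨hAcomp, hAneA, hAinvA, B, hBopen, hBfwd, ⟨T, hT0, htrap⟩, hAeq⟩ := hAatt
  have hBuniv : B = Set.univ := by
    by_contra hBu
    obtain ⟨r, hr⟩ : ∃ r, r ∉ B := by
      by_contra h
      push_neg at h
      exact hBu (Set.eq_univ_of_forall h)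
    obtain ⟨a0, ha0⟩ := hAneA
    have haB : a0 ∈ B := by
      rw [hAeq] at ha0
      simp only [Set.mem_iInter] at ha0
      have := (mem_image_flow hφ).1 (ha0 0 (Set.mem_Ici.2 le_rfl))
      rwa [neg_zero, hφ.2.1] at this
    set D : Set X := (fun x => φ x T) '' closure B with hDdef
    have hDcomp : IsCompact D := (isClosed_closure.isCompact).image (flow_cont_right hφ.1 T)
    have hDB : D ⊆ B := by
      rintro _ ⟨c, hc, rfl⟩
      exact htrap T le_rfl c hc
    obtain ⟨δ, hδ0, hδB⟩ := hDcomp.exists_thickening_subset_open hBopen hDB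
    have hpr : Pseudo φ a0 r := pseudo_trans (h1 a0) (h2' r)
    obtain ⟨n, z, t, hn, h0, hn', hj⟩ := hpr δ hδ0 T hT0
    have hstay : ∀ i ≤ n, z i ∈ B := by
      intro i
      induction i with
      | zero => intro _; rw [h0]; exact haB
      | succ k ih =>
        intro hk
        have hkB := ih (by omega)
        obtain ⟨hT'', hd⟩ := hj k (by omega)
        have hmid : φ (z k) (t k - T) ∈ closure B :=
          subset_closure (hBfwd (z k) hkB (t k - T) (by linarith))
        have hD : φ (z k) (t k) ∈ D := by
          refine ⟨φ (z k) (t k - T), hmid, ?_⟩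
          show φ (φ (z k) (t k - T)) T = φ (z k) (t k)
          rw [hφ.2.2, show t k - T + T = t k by ring]
        have hth : z (k + 1) ∈ Metric.thickening δ D :=
          Metric.mem_thickening_iff.2 ⟨_, hD, by rw [dist_comm]; exact hd⟩
        exact hδB hth
    exact hr (hn' ▸ hstay n le_rfl)
  rw [hAeq, hBuniv]
  apply Set.eq_univ_of_forall
  intro x
  simp only [Set.mem_iInter]
  intro t ht
  exact (mem_image_flow hφ).2 (Set.mem_univ _)
end
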